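/- arXiv:1601.06852 — 3 statements merged into one kernel-verified Lean document; each statement's English description precedes it below -/
import Mathlib

section
/- Let m and n be integers with 2 ≤ 2m < n+1. There exists a constant c(n,m) > 0 depending only on n and m such that for every f ∈ L¹(ℝ^n) and every λ > 0, the Lebesgue measure of the set {X ∈ ℝ^{n+1}_+ : |(P_m * f)(X)| > λ} is at most c(n,m) λ^{−(n+1)/n} ‖f‖_{L¹(ℝ^n)}^{(n+1)/n}; that is, P_m * f belongs to weak-L^{(n+1)/n}(ℝ^{n+1}_+). -/
open MeasureTheory Filter Asymptotics
open scoped Topology ENNReal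

noncomputable section

/-- Points of `ℝ^{n+1}` are written `X = (x, t)` with `x ∈ ℝ^n` and `t ∈ ℝ`. -/
abbrev Pt (n : ℕ) := (EuclideanSpace ℝ (Fin n)) × ℝ

/-- The Laplacian on `ℝ^{n+1} = ℝ^n × ℝ`, computed as the sum of the second partial
derivatives in the coordinate directions. -/
def lap (n : ℕ) (f : Pt n → ℝ) : Pt n → ℝ := fun X =>
  (∑ i : Fin n,
      fderiv ℝ (fun Y => fderiv ℝ f Y ((EuclideanSpace.single i (1:ℝ)), (0:ℝ))) X
        ((EuclideanSpace.single i (1:ℝ)), (0:ℝ)))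
    + fderiv ℝ (fun Y => fderiv ℝ f Y ((0 : EuclideanSpace ℝ (Fin n)), (1:ℝ))) X
        ((0 : EuclideanSpace ℝ (Fin n)), (1:ℝ))

/-- `lapIter n m f = Δ^m f`. -/
def lapIter (n m : ℕ) (f : Pt n → ℝ) : Pt n → ℝ := (lap n)^[m] f

/-- `∂_t f`, the partial derivative in the last (`t`) variable. -/
def dt (n : ℕ) (f : Pt n → ℝ) (X : Pt n) : ℝ :=
  fderiv ℝ f X ((0 : EuclideanSpace ℝ (Fin n)), (1:ℝ))

/-- The Poisson-type kernel `P_m(x,t) = β(n,m) t^{2m-1} (|x|² + t²)^{-(n+2m-1)/2}`, with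
`β(n,m) = π^{-n/2} Γ((n+2m-1)/2) / Γ(m - 1/2)`. -/
def Pker (n m : ℕ) (x : EuclideanSpace ℝ (Fin n)) (t : ℝ) : ℝ :=
  (Real.pi ^ (-(n:ℝ)/2) * Real.Gamma (((n:ℝ) + 2*m - 1)/2) / Real.Gamma ((m:ℝ) - 1/2)) *
    t ^ (2*m - 1) * (‖x‖^2 + t^2) ^ (-(((n:ℝ) + 2*m - 1)/2))

/-- The convolution `(P_m * f)(x,t) = ∫_{ℝ^n} P_m(x-y, t) f(y) dy`. -/
def Pconv (n m : ℕ) (f : EuclideanSpace ℝ (Fin n) → ℝ) (X : Pt n) : ℝ :=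
  ∫ y : EuclideanSpace ℝ (Fin n), Pker n m (X.1 - y) X.2 * f y

/-! The kernel obeys `|P_m(x,t)| ≤ β t^{-n}`, and by scaling `‖P_m(·,t)‖_{L¹}` does not depend on
`t` (and is finite as `m ≥ 1`). The pointwise bound shows that `|P_m * f (x,t)| > λ` forces
`t ≤ T := (β ‖f‖₁ / λ)^{1/n}`; on the strip `ℝⁿ × (0,T]`, Chebyshev's inequality and Tonelli give
measure at most `λ⁻¹ · T · ‖P_m(·,1)‖₁ · ‖f‖₁`, which is the claimed bound. -/

theorem le_rpow_inv_of_lt_mul_rpow_neg {t d B lam : ℝ} (ht : 0 < t) (hd : 0 < d) (hlam : 0 < lam)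
    (h : lam < B * t ^ (-d)) : t ≤ (B / lam) ^ d⁻¹ := by
  have htd : t ^ d < B / lam := by
    rw [lt_div_iff₀ hlam, ← lt_div_iff₀' (Real.rpow_pos_of_pos ht d), div_eq_mul_inv,
      ← Real.rpow_neg ht.le]
    exact h
  calc t = (t ^ d) ^ d⁻¹ := by rw [← Real.rpow_mul ht.le, mul_inv_cancel₀ hd.ne', Real.rpow_one]
    _ ≤ (B / lam) ^ d⁻¹ := Real.rpow_le_rpow (by positivity) htd.le (by positivity)

theorem mul_mul_rpow_inv_div_eq {A L lam d : ℝ} (hA : 0 ≤ A) (hL : 0 ≤ L) (hlam : 0 < lam)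
    (hd : 0 < d) :
    L * (A * L / lam) ^ d⁻¹ / lam = A ^ d⁻¹ * lam ^ (-((d + 1) / d)) * L ^ ((d + 1) / d) := by
  have hsplit : (d + 1) / d = 1 + d⁻¹ := by field_simp
  have hne : (1 : ℝ) + d⁻¹ ≠ 0 := by positivity
  rw [Real.div_rpow (by positivity) hlam.le, Real.mul_rpow hA hL, hsplit, Real.rpow_neg hlam.le,
    Real.rpow_add hlam, Real.rpow_add' hL hne, Real.rpow_one, Real.rpow_one]
  field_simp

theorem lintegral_lintegral_sub_mul {G : Type*} [AddGroup G] [MeasurableSpace G]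
    [MeasurableSub₂ G] [MeasurableAdd G] {μ : Measure G} [SFinite μ] [μ.IsAddRightInvariant]
    {k g : G → ℝ≥0∞} (hk : Measurable k) (hg : AEMeasurable g μ) :
    ∫⁻ x, ∫⁻ y, k (x - y) * g y ∂μ ∂μ = (∫⁻ x, k x ∂μ) * ∫⁻ y, g y ∂μ := by
  rw [lintegral_lintegral_swap (by fun_prop)]
  calc ∫⁻ y, ∫⁻ x, k (x - y) * g y ∂μ ∂μ = ∫⁻ y, (∫⁻ x, k x ∂μ) * g y ∂μ := by
        refine lintegral_congr fun y => ?_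
        rw [lintegral_mul_const _ (by fun_prop), lintegral_sub_right_eq_self k y]
    _ = (∫⁻ x, k x ∂μ) * ∫⁻ y, g y ∂μ := lintegral_const_mul'' _ hg

theorem lintegral_comp_smul {F : Type*} [NormedAddCommGroup F] [NormedSpace ℝ F]
    [MeasurableSpace F] [BorelSpace F] [FiniteDimensional ℝ F] (μ : Measure F) [μ.IsAddHaarMeasure]
    (g : F → ℝ≥0∞) {r : ℝ} (hr : r ≠ 0) :
    ∫⁻ x, g (r • x) ∂μ = ENNReal.ofReal |(r ^ Module.finrank ℝ F)⁻¹| * ∫⁻ x, g x ∂μ := by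
  rw [← smul_eq_mul, ← lintegral_smul_measure, ← Measure.map_addHaar_smul μ hr]
  exact (lintegral_map_equiv g (Homeomorph.smulOfNeZero r hr).toMeasurableEquiv).symm

def halfSpaceConv {E : Type*} [Sub E] [MeasurableSpace E] (μ : Measure E) (K : E → ℝ → ℝ)
    (f : E → ℝ) (X : E × ℝ) : ℝ :=
  ∫ y, K (X.1 - y) X.2 * f y ∂μ

theorem abs_halfSpaceConv_le {E : Type*} [Sub E] [MeasurableSpace E] {μ : Measure E}
    {K : E → ℝ → ℝ} {f : E → ℝ} (hf : Integrable f μ) {X : E × ℝ} {B : ℝ}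
    (hK : ∀ x, |K x X.2| ≤ B) :
    |halfSpaceConv μ K f X| ≤ B * ∫ y, |f y| ∂μ := by
  rw [← integral_const_mul, ← Real.norm_eq_abs]
  refine norm_integral_le_of_norm_le (hf.abs.const_mul B) (ae_of_all _ fun y => ?_)
  rw [norm_mul, Real.norm_eq_abs, Real.norm_eq_abs]
  exact mul_le_mul_of_nonneg_right (hK _) (abs_nonneg _)

section WeakType

variable {E : Type*} [AddGroup E] [MeasurableSpace E] [MeasurableSub₂ E] {μ : Measure E}
  [SFinite μ] {K : E → ℝ → ℝ}

theorem aemeasurable_lintegral_enorm_kernel_mul (hK : Measurable (Function.uncurry K))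
    {f : E → ℝ} (hf : AEMeasurable f μ) :
    AEMeasurable (fun X : E × ℝ => ∫⁻ y, ‖K (X.1 - y) X.2‖ₑ * ‖f y‖ₑ ∂μ) (μ.prod volume) := by
  refine AEMeasurable.lintegral_prod_right'
    (f := fun p : (E × ℝ) × E => ‖K (p.1.1 - p.2) p.1.2‖ₑ * ‖f p.2‖ₑ) ?_
  have hK' : Measurable fun p : (E × ℝ) × E => K (p.1.1 - p.2) p.1.2 :=
    hK.comp ((measurable_fst.fst.sub measurable_snd).prodMk measurable_fst.snd)
  have hf' : AEMeasurable (fun p : (E × ℝ) × E => f p.2) ((μ.prod volume).prod μ) :=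
    hf.comp_snd
  fun_prop

theorem measure_lt_abs_halfSpaceConv_le [MeasurableAdd E] [μ.IsAddRightInvariant]
    (hK : Measurable (Function.uncurry K)) {A d q : ℝ}
    (hd : 0 < d) (hK_le : ∀ x t, 0 < t → |K x t| ≤ A * t ^ (-d))
    (hK_L1 : ∀ t, 0 < t → ∫⁻ x, ‖K x t‖ₑ ∂μ ≤ ENNReal.ofReal q)
    {f : E → ℝ} (hf : Integrable f μ) {lam : ℝ} (hlam : 0 < lam) :
    (μ.prod volume) {X : E × ℝ | 0 < X.2 ∧ lam < |halfSpaceConv μ K f X|} ≤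
      ENNReal.ofReal
        (q * A ^ d⁻¹ * lam ^ (-((d + 1) / d)) * (∫ y, |f y| ∂μ) ^ ((d + 1) / d)) := by
  set L := ∫ y, |f y| ∂μ
  have hL : 0 ≤ L := integral_nonneg fun y => abs_nonneg _
  have hA : 0 ≤ A := by simpa using (abs_nonneg _).trans (hK_le 0 1 one_pos)
  set T := (A * L / lam) ^ d⁻¹
  set S : Set (E × ℝ) := Set.univ ×ˢ Set.Ioc 0 T
  set F : E × ℝ → ℝ≥0∞ := fun X => ∫⁻ y, ‖K (X.1 - y) X.2‖ₑ * ‖f y‖ₑ ∂μ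
  have hsub : {X : E × ℝ | 0 < X.2 ∧ lam < |halfSpaceConv μ K f X|} ⊆
      S ∩ {X | ENNReal.ofReal lam ≤ F X} := by
    rintro X ⟨ht, hlt⟩
    have hconv := abs_halfSpaceConv_le hf fun x => hK_le x X.2 ht
    refine ⟨⟨trivial, ht, ?_⟩, ?_⟩
    · refine le_rpow_inv_of_lt_mul_rpow_neg ht hd hlam (hlt.trans_le (hconv.trans_eq ?_))
      ring
    · calc ENNReal.ofReal lam ≤ ‖halfSpaceConv μ K f X‖ₑ := by
            rw [Real.enorm_eq_ofReal_abs]; exact ENNReal.ofReal_le_ofReal hlt.le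
        _ ≤ F X := by
            refine (enorm_integral_le_lintegral_enorm _).trans_eq (lintegral_congr fun y => ?_)
            exact enorm_mul _ _
  have hfiber : ∀ t, 0 < t → ∫⁻ x, F (x, t) ∂μ ≤ ENNReal.ofReal q * ENNReal.ofReal L := by
    intro t ht
    have hKt : Measurable fun x => ‖K x t‖ₑ :=
      (hK.comp (measurable_id.prodMk measurable_const)).enorm
    rw [show ∫⁻ x, F (x, t) ∂μ = (∫⁻ x, ‖K x t‖ₑ ∂μ) * ∫⁻ y, ‖f y‖ₑ ∂μ from
      lintegral_lintegral_sub_mul hKt hf.1.enorm, ← ofReal_integral_norm_eq_lintegral_enorm hf]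
    exact mul_le_mul_left (hK_L1 t ht) _
  have hF := aemeasurable_lintegral_enorm_kernel_mul hK hf.1.aemeasurable
  have hprod : (μ.prod volume).restrict S = μ.prod (volume.restrict (Set.Ioc 0 T)) := by
    rw [← Measure.prod_restrict, Measure.restrict_univ]
  have hstrip : ∫⁻ X in S, F X ∂(μ.prod volume) ≤
      ENNReal.ofReal q * ENNReal.ofReal L * ENNReal.ofReal T := by
    rw [hprod, lintegral_prod_symm _ (hprod ▸ hF.restrict)]
    calc ∫⁻ t in Set.Ioc 0 T, ∫⁻ x, F (x, t) ∂μ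
        ≤ ∫⁻ _ in Set.Ioc 0 T, ENNReal.ofReal q * ENNReal.ofReal L :=
          setLIntegral_mono' measurableSet_Ioc fun t ht => hfiber t ht.1
      _ = ENNReal.ofReal q * ENNReal.ofReal L * ENNReal.ofReal T := by
          rw [setLIntegral_const, Real.volume_Ioc, sub_zero]
  have hS : MeasurableSet S := MeasurableSet.univ.prod measurableSet_Ioc
  have hT : 0 ≤ T := by positivity
  calc (μ.prod volume) {X : E × ℝ | 0 < X.2 ∧ lam < |halfSpaceConv μ K f X|}
      ≤ (μ.prod volume).restrict S {X | ENNReal.ofReal lam ≤ F X} := by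
        rw [Measure.restrict_apply' hS, Set.inter_comm]
        exact measure_mono hsub
    _ ≤ (∫⁻ X in S, F X ∂(μ.prod volume)) / ENNReal.ofReal lam :=
        meas_ge_le_lintegral_div hF.restrict (by simpa using hlam) ENNReal.ofReal_ne_top
    _ ≤ ENNReal.ofReal q * ENNReal.ofReal L * ENNReal.ofReal T / ENNReal.ofReal lam := by
        gcongr
    _ = ENNReal.ofReal (q * (L * T / lam)) := by
        rw [ENNReal.ofReal_mul' (by positivity), ENNReal.ofReal_div_of_pos hlam,
          ENNReal.ofReal_mul' hT, mul_assoc, mul_div_assoc]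
    _ = _ := by
        rw [mul_mul_rpow_inv_div_eq hA hL hlam hd, ← mul_assoc, ← mul_assoc]

end WeakType

section PoissonKernel

variable {n m : ℕ}

theorem measurable_uncurry_Pker : Measurable (Function.uncurry (Pker n m)) := by
  unfold Pker Function.uncurry
  fun_prop

theorem Pker_pos (hm : 1 ≤ m) (x : EuclideanSpace ℝ (Fin n)) {t : ℝ} (ht : 0 < t) :
    0 < Pker n m x t := by
  have hm' : (1 : ℝ) ≤ m := by exact_mod_cast hm
  have hΓ₁ : 0 < Real.Gamma (((n : ℝ) + 2 * m - 1) / 2) :=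
    Real.Gamma_pos_of_pos (by linarith [(n.cast_nonneg : (0 : ℝ) ≤ n)])
  have hΓ₂ : 0 < Real.Gamma ((m : ℝ) - 1 / 2) := Real.Gamma_pos_of_pos (by linarith)
  unfold Pker
  positivity

theorem Pker_smul_self (hm : 1 ≤ m) (u : EuclideanSpace ℝ (Fin n)) {t : ℝ} (ht : 0 < t) :
    Pker n m (t • u) t = t ^ (-(n : ℝ)) * Pker n m u 1 := by
  have hsq : ‖t • u‖ ^ 2 + t ^ 2 = t ^ 2 * (‖u‖ ^ 2 + 1 ^ 2) := by
    rw [norm_smul, Real.norm_eq_abs, abs_of_pos ht]; ring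
  have hpow : t ^ (2 * m - 1) * (t ^ 2) ^ (-(((n : ℝ) + 2 * m - 1) / 2)) = t ^ (-(n : ℝ)) := by
    rw [← Real.rpow_natCast, ← Real.rpow_natCast t 2, ← Real.rpow_mul ht.le, ← Real.rpow_add ht,
      Nat.cast_sub (by omega)]
    push_cast
    ring_nf
  unfold Pker
  rw [hsq, Real.mul_rpow (by positivity) (by positivity), ← hpow]
  ring

theorem Pker_le_Pker_zero (hm : 1 ≤ m) (x : EuclideanSpace ℝ (Fin n)) {t : ℝ} (ht : 0 < t) :
    Pker n m x t ≤ Pker n m 0 t := by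
  have hm' : (1 : ℝ) ≤ m := by exact_mod_cast hm
  have hcoef : 0 ≤ Pker n m 0 1 * t ^ (2 * m - 1) := by
    have := Pker_pos hm (0 : EuclideanSpace ℝ (Fin n)) one_pos
    positivity
  have hdecay : (‖x‖ ^ 2 + t ^ 2) ^ (-(((n : ℝ) + 2 * m - 1) / 2)) ≤
      (‖(0 : EuclideanSpace ℝ (Fin n))‖ ^ 2 + t ^ 2) ^ (-(((n : ℝ) + 2 * m - 1) / 2)) :=
    Real.rpow_le_rpow_of_nonpos (by simp [ht]) (by simp)
      (by linarith [(n.cast_nonneg : (0 : ℝ) ≤ n)])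
  simpa [Pker] using mul_le_mul_of_nonneg_left hdecay hcoef

-- `Pker n m 0 1` is the normalising constant `β(n,m)`.
theorem abs_Pker_le (hm : 1 ≤ m) (x : EuclideanSpace ℝ (Fin n)) {t : ℝ} (ht : 0 < t) :
    |Pker n m x t| ≤ Pker n m 0 1 * t ^ (-(n : ℝ)) := by
  rw [abs_of_pos (Pker_pos hm x ht), mul_comm, ← Pker_smul_self hm 0 ht, smul_zero]
  exact Pker_le_Pker_zero hm x ht

theorem integrable_Pker_one (hm : 1 ≤ m) :
    Integrable fun x : EuclideanSpace ℝ (Fin n) => Pker n m x 1 := by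
  have hm' : (1 : ℝ) ≤ m := by exact_mod_cast hm
  have hdecay := integrable_rpow_neg_one_add_norm_sq (E := EuclideanSpace ℝ (Fin n)) (μ := volume)
    (r := (n : ℝ) + 2 * m - 1) (by rw [finrank_euclideanSpace_fin]; linarith)
  refine (hdecay.const_mul (Pker n m 0 1)).congr (ae_of_all _ fun x => ?_)
  simp only [Pker, norm_zero, one_pow, mul_one, ne_eq, OfNat.ofNat_ne_zero, not_false_eq_true,
    zero_pow, zero_add, Real.one_rpow, neg_div, add_comm 1 (‖x‖ ^ 2)]

theorem integral_Pker_one_pos (hm : 1 ≤ m) : 0 < ∫ x : EuclideanSpace ℝ (Fin n), Pker n m x 1 := by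
  rw [integral_pos_iff_support_of_nonneg (fun x => (Pker_pos hm x one_pos).le)
      (integrable_Pker_one hm), Function.support_eq_univ fun x => (Pker_pos hm x one_pos).ne']
  exact Measure.measure_univ_pos.mpr (NeZero.ne _)

theorem lintegral_enorm_Pker (hm : 1 ≤ m) {t : ℝ} (ht : 0 < t) :
    ∫⁻ x : EuclideanSpace ℝ (Fin n), ‖Pker n m x t‖ₑ = ENNReal.ofReal (∫ x, Pker n m x 1) := by
  have hscale := lintegral_comp_smul volume (fun x => ‖Pker n m x t‖ₑ) ht.ne'
  have hc : ENNReal.ofReal |(t ^ Module.finrank ℝ (EuclideanSpace ℝ (Fin n)))⁻¹| =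
      ‖t ^ (-(n : ℝ))‖ₑ := by
    rw [Real.enorm_eq_ofReal_abs, finrank_euclideanSpace_fin, Real.rpow_neg ht.le,
      Real.rpow_natCast]
  simp_rw [Pker_smul_self hm _ ht, enorm_mul, hc] at hscale
  rw [lintegral_const_mul' _ _ enorm_ne_top] at hscale
  rw [← (ENNReal.mul_right_inj (by simp [ht.ne']) enorm_ne_top).mp hscale,
    ← ofReal_integral_norm_eq_lintegral_enorm (integrable_Pker_one hm)]
  simp_rw [Real.norm_of_nonneg (Pker_pos hm _ one_pos).le]

end PoissonKernel

theorem statement2 (n m : ℕ) (hm : 2 ≤ 2*m) (hmn : 2*m < n + 1) :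
    ∃ c : ℝ, 0 < c ∧
      ∀ f : EuclideanSpace ℝ (Fin n) → ℝ, Integrable f →
        ∀ lam : ℝ, 0 < lam →
          volume {X : Pt n | 0 < X.2 ∧ lam < |Pconv n m f X|} ≤
            ENNReal.ofReal
              (c * lam ^ (-(((n:ℝ) + 1)/n)) * (∫ y, |f y|) ^ (((n:ℝ) + 1)/n)) := by
  have hm1 : 1 ≤ m := by omega
  have hn : (0 : ℝ) < n := by exact_mod_cast (show 0 < n by omega)
  refine ⟨(∫ x, Pker n m x 1) * Pker n m 0 1 ^ (n : ℝ)⁻¹,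
    mul_pos (integral_Pker_one_pos hm1) (Real.rpow_pos_of_pos (Pker_pos hm1 0 one_pos) _),
    fun f hf lam hlam => ?_⟩
  exact measure_lt_abs_halfSpaceConv_le measurable_uncurry_Pker hn
    (fun x _ ht => abs_Pker_le hm1 x ht) (fun _ ht => (lintegral_enorm_Pker hm1 ht).le) hf hlam
end
end

section
/- Let m and n be integers with 2 ≤ 2m < n+1. Let f : ℝ^n → ℝ be measurable such that both f ∈ L¹(ℝ^n) and f_{0,1} ∈ L¹(ℝ^n), where f_{0,1}(x) := |x|^{2m−1−n} f(x/|x|²). Let v = P_m * f. Then for every X ∈ ℝ^{n+1}_+ one has v*(X) = (P_m * f_{0,1})(X), where v*(X) := |X|^{2m−1−n} v(X/|X|²) is the m-Kelvin transform of v with respect to the origin and radius 1. -/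
open MeasureTheory Filter Asymptotics
open scoped Topology ENNReal

noncomputable section

/-- The `m`-Kelvin transform of `v` with respect to the origin and radius 1:
`v*(X) = |X|^{2m-1-n} v(X/|X|²)`, where `|X|² = ‖x‖² + t²`. -/
def kelvinFn (n m : ℕ) (v : Pt n → ℝ) (X : Pt n) : ℝ :=
  Real.sqrt (‖X.1‖^2 + X.2^2) ^ (2*(m:ℝ) - 1 - n) * v ((‖X.1‖^2 + X.2^2)⁻¹ • X)

/-!
Apply the inversion `y = z/|z|²` of `ℝⁿ` to the integral defining `(P_m * f)(X/|X|²)`. Its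
Jacobian is `|z|^{-2n}`, and the inversion identity
`|X/|X|² - (z, 0)|² = |z|² |X|⁻² |X - (z/|z|², 0)|²` turns the kernel
`|X|^{2m-1-n} P_m(X/|X|² - (z, 0))` into `|z|^{-2n} P_m(x - z/|z|², t) |z|^{n+1-2m}`,
which is exactly the integrand of `P_m * f_{0,1}` after the change of variables.
-/

open EuclideanGeometry

section Inversion

variable {E : Type*} [NormedAddCommGroup E] [InnerProductSpace ℝ E]

lemma inversion_zero_one_apply (x : E) : inversion (0 : E) 1 x = (‖x‖ ^ 2)⁻¹ • x := by
  simp [inversion, one_div, inv_pow]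

lemma norm_inversion_zero_one (x : E) : ‖inversion (0 : E) 1 x‖ = ‖x‖⁻¹ := by
  simpa [one_div] using dist_inversion_center (0 : E) x 1

lemma abs_det_fderiv_inversion_zero_one [FiniteDimensional ℝ E] (x : E) :
    |((1 / dist x 0) ^ 2 • ((ℝ ∙ (x - 0))ᗮ.reflection : E →L[ℝ] E)).det|
      = (‖x‖ ^ 2)⁻¹ ^ Module.finrank ℝ E := by
  have hR : (((ℝ ∙ x)ᗮ.reflection : E →L[ℝ] E) : E →ₗ[ℝ] E) =
      (ℝ ∙ x)ᗮ.reflection.toLinearMap := rfl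
  rw [ContinuousLinearMap.det, ContinuousLinearMap.toLinearMap_smul, LinearMap.det_smul, sub_zero,
    hR, Submodule.det_reflection]
  simp [abs_mul, abs_pow, one_div, inv_pow]

theorem integral_comp_inversion_zero_one [FiniteDimensional ℝ E] [Nontrivial E]
    [MeasurableSpace E] [BorelSpace E] (μ : Measure E) [μ.IsAddHaarMeasure]
    {F : Type*} [NormedAddCommGroup F] [NormedSpace ℝ F] (g : E → F) :
    ∫ x, (‖x‖ ^ 2)⁻¹ ^ Module.finrank ℝ E • g (inversion 0 1 x) ∂μ = ∫ y, g y ∂μ := by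
  have hs : MeasurableSet ({0}ᶜ : Set E) := (measurableSet_singleton 0).compl
  have himage : inversion (0 : E) 1 '' {0}ᶜ = {0}ᶜ := by
    rw [(inversion_involutive (0 : E) one_ne_zero).image_eq_preimage_symm]
    ext x
    simp
  conv_rhs => rw [← restrict_compl_singleton (μ := μ) 0, ← himage,
    integral_image_eq_integral_abs_det_fderiv_smul μ hs
      (fun x hx => (hasFDerivAt_inversion hx).hasFDerivWithinAt)
      (inversion_injective (0 : E) one_ne_zero).injOn]
  simp only [abs_det_fderiv_inversion_zero_one, restrict_compl_singleton]

lemma norm_inv_smul_sub_sq_add_sq (x z : E) {t : ℝ} (hq : ‖x‖ ^ 2 + t ^ 2 ≠ 0) (hz : z ≠ 0) :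
    ‖(‖x‖ ^ 2 + t ^ 2)⁻¹ • x - z‖ ^ 2 + ((‖x‖ ^ 2 + t ^ 2)⁻¹ * t) ^ 2
      = ‖z‖ ^ 2 * (‖x‖ ^ 2 + t ^ 2)⁻¹ * (‖x - inversion 0 1 z‖ ^ 2 + t ^ 2) := by
  have hz' : ‖z‖ ≠ 0 := norm_ne_zero_iff.2 hz
  rw [inversion_zero_one_apply, norm_sub_sq_real, norm_sub_sq_real, real_inner_smul_left,
    real_inner_smul_right, norm_smul, norm_smul, Real.norm_of_nonneg (by positivity),
    Real.norm_of_nonneg (by positivity)]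
  field_simp
  ring

end Inversion

section Kernel

variable (n m : ℕ)

lemma sqrt_rpow_mul_inv_pow_mul_inv_rpow {q : ℝ} (hq : 0 < q) (hm : 1 ≤ m) :
    Real.sqrt q ^ (2 * (m : ℝ) - 1 - n) * q⁻¹ ^ (2 * m - 1) *
        q⁻¹ ^ (-(((n : ℝ) + 2 * m - 1) / 2)) = 1 := by
  rw [Real.sqrt_eq_rpow, ← Real.rpow_mul hq.le, ← Real.rpow_natCast, Real.inv_rpow hq.le,
    Real.inv_rpow hq.le, ← Real.rpow_neg hq.le, ← Real.rpow_neg hq.le, ← Real.rpow_add hq,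
    ← Real.rpow_add hq, Nat.cast_sub (by omega)]
  push_cast
  ring_nf
  exact Real.rpow_zero q

lemma sq_rpow_eq_inv_sq_pow_mul_inv_rpow {b : ℝ} (hb : 0 < b) :
    (b ^ 2) ^ (-(((n : ℝ) + 2 * m - 1) / 2)) = (b ^ 2)⁻¹ ^ n * b⁻¹ ^ (2 * (m : ℝ) - 1 - n) := by
  rw [← Real.rpow_natCast b 2, ← Real.rpow_mul hb.le, ← Real.rpow_natCast,
    Real.inv_rpow (by positivity), Real.inv_rpow hb.le, ← Real.rpow_neg (by positivity),
    ← Real.rpow_neg hb.le, ← Real.rpow_mul hb.le, ← Real.rpow_add hb]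
  push_cast
  ring_nf

lemma sqrt_rpow_mul_Pker_kelvin (hm : 1 ≤ m) (x z : EuclideanSpace ℝ (Fin n)) {t : ℝ}
    (ht : 0 < t) (hz : z ≠ 0) :
    Real.sqrt (‖x‖ ^ 2 + t ^ 2) ^ (2 * (m : ℝ) - 1 - n) *
        Pker n m ((‖x‖ ^ 2 + t ^ 2)⁻¹ • x - z) ((‖x‖ ^ 2 + t ^ 2)⁻¹ * t)
      = (‖z‖ ^ 2)⁻¹ ^ n * (Pker n m (x - inversion 0 1 z) t * ‖z‖⁻¹ ^ (2 * (m : ℝ) - 1 - n)) := by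
  have hq : 0 < ‖x‖ ^ 2 + t ^ 2 := by positivity
  have hB : 0 < ‖x - inversion 0 1 z‖ ^ 2 + t ^ 2 := by positivity
  unfold Pker
  rw [norm_inv_smul_sub_sq_add_sq x z hq.ne' hz, Real.mul_rpow (by positivity) hB.le,
    Real.mul_rpow (by positivity) (by positivity),
    sq_rpow_eq_inv_sq_pow_mul_inv_rpow n m (norm_pos_iff.2 hz), mul_pow]
  generalize Real.pi ^ (-(n : ℝ) / 2) * Real.Gamma (((n : ℝ) + 2 * m - 1) / 2) /
    Real.Gamma ((m : ℝ) - 1 / 2) = β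
  linear_combination (β * t ^ (2 * m - 1) * (‖z‖ ^ 2)⁻¹ ^ n * ‖z‖⁻¹ ^ (2 * (m : ℝ) - 1 - n) *
    (‖x - inversion 0 1 z‖ ^ 2 + t ^ 2) ^ (-(((n : ℝ) + 2 * m - 1) / 2))) *
    sqrt_rpow_mul_inv_pow_mul_inv_rpow n m hq hm

end Kernel

theorem statement5_general (n m : ℕ) (hm : 2 ≤ 2*m) (hmn : 2*m < n + 1)
    (f : EuclideanSpace ℝ (Fin n) → ℝ) :
    ∀ X : Pt n, 0 < X.2 →
      kelvinFn n m (Pconv n m f) X =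
        Pconv n m
          (fun x : EuclideanSpace ℝ (Fin n) =>
            ‖x‖ ^ (2*(m:ℝ) - 1 - n) * f ((‖x‖^2)⁻¹ • x)) X := by
  intro X hX
  have : NeZero n := ⟨by omega⟩
  rw [kelvinFn, Pconv, Pconv, ← integral_const_mul]
  conv_rhs => rw [← integral_comp_inversion_zero_one]
  refine integral_congr_ae ((Measure.ae_ne volume 0).mono fun z hz => ?_)
  simp only [Prod.smul_fst, Prod.smul_snd, smul_eq_mul, finrank_euclideanSpace_fin]
  rw [← inversion_zero_one_apply, inversion_inversion 0 one_ne_zero, norm_inversion_zero_one,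
    ← mul_assoc, sqrt_rpow_mul_Pker_kelvin n m (by omega) X.1 z hX hz]
  ring

theorem statement5 (n m : ℕ) (hm : 2 ≤ 2*m) (hmn : 2*m < n + 1)
    (f : EuclideanSpace ℝ (Fin n) → ℝ)
    (hf : Integrable f)
    (hf01 : Integrable (fun x : EuclideanSpace ℝ (Fin n) =>
      ‖x‖ ^ (2*(m:ℝ) - 1 - n) * f ((‖x‖^2)⁻¹ • x))) :
    ∀ X : Pt n, 0 < X.2 →
      kelvinFn n m (Pconv n m f) X =
        Pconv n m
          (fun x : EuclideanSpace ℝ (Fin n) =>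
            ‖x‖ ^ (2*(m:ℝ) - 1 - n) * f ((‖x‖^2)⁻¹ • x)) X :=
  statement5_general n m hm hmn f
end
end

section
/- Let n ≥ 4 and m ≥ 1 be integers, and let ξ ∈ C^{2m}((0,∞)). Suppose that either there exist constants c₁ > 0 and r₁ > 0 with (L^{m−1}ξ)(r) ≥ c₁ r^{1−n} for all r ∈ (0, r₁), or there exist constants c̃₁ > 0 and r̃₁ > 0 with (L^{m−1}ξ)(r) ≤ −c̃₁ r^{1−n} for all r ∈ (0, r̃₁). Then either there exist constants c_m > 0 and r_m > 0 with ξ(r) ≥ c_m r^{2m−1−n} for all r ∈ (0, r_m), or there exist constants c̃_m > 0 and r̃_m > 0 with ξ(r) ≤ −c̃_m r^{2m−1−n} for all r ∈ (0, r̃_m). -/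
/-!
Put `w = r^n ξ'`. Then `w' = r^n L ξ`, so a lower bound `L ξ ≥ c r^α` (with `α ≥ 1 - n`) makes
`w - (c/β) r^β` increasing, where `β = n + α + 1 > 0`. If `w` is negative at some point `s`, then
`w ≤ w(s) < 0` on `(0, s)`, i.e. `ξ' ≤ w(s) r^{-n}`, and integrating gives `ξ ≳ r^{1-n} ≥ r^{α+2}`.
Otherwise `w ≥ 0`, and comparing `r` with `r/2` gives `w ≳ r^β`, i.e. `ξ' ≳ r^{α+1}`; integrating
once more yields a bound `±ξ ≳ r^{α+2}` (for `α + 2 ≤ 0` the sign is forced: `ξ → -∞`).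
Replacing `ξ` by `-ξ` handles an upper bound on `L ξ`, and `m - 1` such steps raise the exponent
`1 - n` to `2m - 1 - n`.
-/

open Set
open scoped Topology

noncomputable section

/-- The radial Laplace operator `L = d²/dr² + (n/r) d/dr`. -/
def Lrad (n : ℕ) (ξ : ℝ → ℝ) : ℝ → ℝ := fun r =>
  deriv (deriv ξ) r + ((n : ℝ)/r) * deriv ξ r

def PowerLowerBound (f : ℝ → ℝ) (e : ℝ) : Prop :=
  ∃ c : ℝ, 0 < c ∧ ∃ ρ : ℝ, 0 < ρ ∧ ∀ r ∈ Ioo (0:ℝ) ρ, c * r ^ e ≤ f r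

def SignedPowerBound (f : ℝ → ℝ) (e : ℝ) : Prop :=
  PowerLowerBound f e ∨
    ∃ c : ℝ, 0 < c ∧ ∃ ρ : ℝ, 0 < ρ ∧ ∀ r ∈ Ioo (0:ℝ) ρ, f r ≤ -(c * r ^ e)

section PowerBounds

variable {f : ℝ → ℝ} {e : ℝ}

theorem signedPowerBound_iff :
    SignedPowerBound f e ↔ PowerLowerBound f e ∨ PowerLowerBound (-f) e := by
  simp only [SignedPowerBound, PowerLowerBound, Pi.neg_apply, le_neg]

theorem signedPowerBound_neg : SignedPowerBound (-f) e ↔ SignedPowerBound f e := by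
  rw [signedPowerBound_iff, signedPowerBound_iff, neg_neg, or_comm]

theorem PowerLowerBound.mono {e' : ℝ} (h : PowerLowerBound f e) (hee' : e ≤ e') :
    PowerLowerBound f e' := by
  obtain ⟨c, hc, ρ, hρ, hf⟩ := h
  refine ⟨c, hc, min ρ 1, lt_min hρ one_pos, fun r ⟨hr0, hr⟩ => ?_⟩
  calc c * r ^ e' ≤ c * r ^ e :=
        mul_le_mul_of_nonneg_left
          (Real.rpow_le_rpow_of_exponent_ge hr0 (hr.trans_le (min_le_right _ _)).le hee') hc.le
    _ ≤ f r := hf r ⟨hr0, hr.trans_le (min_le_left _ _)⟩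

theorem powerLowerBound_of_const_add_rpow_le {C D s : ℝ} (hD : 0 < D) (he : e < 0) (hs : 0 < s)
    (h : ∀ r ∈ Ioo (0:ℝ) s, C + D * r ^ e ≤ f r) : PowerLowerBound f e := by
  set X : ℝ := 2 * (|C| + 1) / D
  have hX : 0 < X := by positivity
  set t : ℝ := X ^ e⁻¹
  have ht : 0 < t := Real.rpow_pos_of_pos hX _
  refine ⟨D / 2, half_pos hD, min s t, lt_min hs ht, fun r ⟨hr0, hr⟩ => ?_⟩
  -- `r ^ e` is decreasing and equals `X` at `t`, so it exceeds `X` on `(0, t)`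
  have hXr : X ≤ r ^ e := by
    calc X = t ^ e := by rw [← Real.rpow_mul hX.le, inv_mul_cancel₀ he.ne, Real.rpow_one]
      _ ≤ r ^ e := Real.rpow_le_rpow_of_nonpos hr0 (hr.trans_le (min_le_right _ _)).le he.le
  have hCX : -C ≤ D / 2 * X := by
    rw [show D / 2 * X = |C| + 1 by simp only [X]; field_simp]
    linarith [neg_le_abs C]
  have := h r ⟨hr0, hr.trans_le (min_le_left _ _)⟩
  nlinarith

end PowerBounds

theorem monotoneOn_sub_of_hasDerivAt_le {f g f' g' : ℝ → ℝ} {a b : ℝ}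
    (hf : ∀ x ∈ Ioo a b, HasDerivAt f (f' x) x) (hg : ∀ x ∈ Ioo a b, HasDerivAt g (g' x) x)
    (hle : ∀ x ∈ Ioo a b, g' x ≤ f' x) : MonotoneOn (fun x => f x - g x) (Ioo a b) := by
  have hd : ∀ x ∈ Ioo a b, HasDerivAt (fun x => f x - g x) (f' x - g' x) x :=
    fun x hx => (hf x hx).sub (hg x hx)
  refine monotoneOn_of_hasDerivWithinAt_nonneg (f' := fun x => f' x - g' x) (convex_Ioo a b)
    (fun x hx => (hd x hx).continuousAt.continuousWithinAt) ?_ ?_ <;> rw [interior_Ioo]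
  · exact fun x hx => (hd x hx).hasDerivWithinAt
  · exact fun x hx => sub_nonneg.2 (hle x hx)

section RpowComparison

variable {f f' : ℝ → ℝ} {a β ρ : ℝ}

theorem monotoneOn_sub_rpow_of_rpow_le_deriv (hβ : β ≠ 0)
    (hf : ∀ r ∈ Ioo 0 ρ, HasDerivAt f (f' r) r) (hle : ∀ r ∈ Ioo 0 ρ, a * r ^ (β - 1) ≤ f' r) :
    MonotoneOn (fun r => f r - a / β * r ^ β) (Ioo 0 ρ) :=
  monotoneOn_sub_of_hasDerivAt_le hf
    (fun r hr => (Real.hasDerivAt_rpow_const (Or.inl hr.1.ne')).const_mul (a / β))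
    (fun r hr => by convert hle r hr using 1; field_simp)

theorem le_of_monotoneOn_sub_rpow (ha : 0 ≤ a) (hβ : 0 ≤ β)
    (hmono : MonotoneOn (fun r => f r - a * r ^ β) (Ioo 0 ρ)) {r s : ℝ}
    (hr : r ∈ Ioo 0 ρ) (hs : s ∈ Ioo 0 ρ) (hrs : r ≤ s) : f r ≤ f s := by
  have h := hmono hr hs hrs
  have : a * r ^ β ≤ a * s ^ β :=
    mul_le_mul_of_nonneg_left (Real.rpow_le_rpow hr.1.le hrs hβ) ha
  simp only at h
  linarith

theorem mul_rpow_le_of_monotoneOn_sub_rpow (hf : ∀ r ∈ Ioo 0 ρ, 0 ≤ f r)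
    (hmono : MonotoneOn (fun r => f r - a * r ^ β) (Ioo 0 ρ)) :
    ∀ r ∈ Ioo 0 ρ, a * (1 - (1 / 2) ^ β) * r ^ β ≤ f r := by
  intro r ⟨hr0, hr⟩
  have hr2 : r / 2 ∈ Ioo 0 ρ := ⟨half_pos hr0, by linarith⟩
  have h := hmono hr2 ⟨hr0, hr⟩ (by linarith)
  have hhalf : (r / 2) ^ β = (1 / 2) ^ β * r ^ β := by
    rw [← Real.mul_rpow (by norm_num) hr0.le]; ring_nf
  simp only [hhalf] at h
  linarith [hf _ hr2]

end RpowComparison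

section Integration

variable {η η' : ℝ → ℝ} {c γ ρ : ℝ}

theorem powerLowerBound_neg_of_rpow_le_deriv_of_neg (hc : 0 < c) (hγ : γ < 0) (hρ : 0 < ρ)
    (hη : ∀ r ∈ Ioo 0 ρ, HasDerivAt η (η' r) r) (hle : ∀ r ∈ Ioo 0 ρ, c * r ^ (γ - 1) ≤ η' r) :
    PowerLowerBound (-η) γ := by
  have hmono := monotoneOn_sub_rpow_of_rpow_le_deriv hγ.ne hη hle
  have hs : ρ / 2 ∈ Ioo 0 ρ := ⟨half_pos hρ, half_lt_self hρ⟩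
  refine powerLowerBound_of_const_add_rpow_le (C := -(η (ρ / 2) - c / γ * (ρ / 2) ^ γ))
    (neg_pos.2 (div_neg_of_pos_of_neg hc hγ)) hγ hs.1 fun r ⟨hr0, hr⟩ => ?_
  have := hmono ⟨hr0, hr.trans hs.2⟩ hs hr.le
  simp only [Pi.neg_apply] at this ⊢
  linarith

theorem powerLowerBound_neg_of_inv_le_deriv (hc : 0 < c) (hρ : 0 < ρ)
    (hη : ∀ r ∈ Ioo 0 ρ, HasDerivAt η (η' r) r) (hle : ∀ r ∈ Ioo 0 ρ, c * r⁻¹ ≤ η' r) :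
    PowerLowerBound (-η) 0 := by
  have hmono := monotoneOn_sub_of_hasDerivAt_le hη
    (fun r hr => (Real.hasDerivAt_log hr.1.ne').const_mul c) hle
  have hs : ρ / 2 ∈ Ioo 0 ρ := ⟨half_pos hρ, half_lt_self hρ⟩
  set U := η (ρ / 2) - c * Real.log (ρ / 2)
  refine ⟨1, one_pos, min (ρ / 2) (Real.exp (-(U + 1) / c)), by positivity,
    fun r ⟨hr0, hr⟩ => ?_⟩
  have hlog : c * Real.log r < -(U + 1) := by
    rw [← lt_div_iff₀' hc, Real.log_lt_iff_lt_exp hr0]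
    exact hr.trans_le (min_le_right _ _)
  have := hmono ⟨hr0, hr.trans_le (min_le_left _ _) |>.trans hs.2⟩ hs
    (hr.trans_le (min_le_left _ _)).le
  simp only [Pi.neg_apply, Real.rpow_zero] at this ⊢
  linarith

theorem signedPowerBound_of_rpow_le_deriv_of_pos (hc : 0 < c) (hγ : 0 < γ) (hρ : 0 < ρ)
    (hη : ∀ r ∈ Ioo 0 ρ, HasDerivAt η (η' r) r) (hle : ∀ r ∈ Ioo 0 ρ, c * r ^ (γ - 1) ≤ η' r) :
    SignedPowerBound η γ := by
  have hmono := monotoneOn_sub_rpow_of_rpow_le_deriv hγ.ne' hη hle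
  by_cases hneg : ∃ s ∈ Ioo 0 ρ, η s < 0
  · obtain ⟨s, hs, hηs⟩ := hneg
    refine Or.inr ⟨-η s, neg_pos.2 hηs, min s 1, lt_min hs.1 one_pos, fun r ⟨hr0, hr⟩ => ?_⟩
    have hrs : r < s := hr.trans_le (min_le_left _ _)
    have hηr := le_of_monotoneOn_sub_rpow (div_pos hc hγ).le hγ.le hmono
      ⟨hr0, hrs.trans hs.2⟩ hs hrs.le
    have hr1 : r ^ γ ≤ 1 := Real.rpow_le_one hr0.le (hr.trans_le (min_le_right _ _)).le hγ.le
    nlinarith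
  · simp only [not_exists, not_and, not_lt] at hneg
    have h2 : (1 / 2 : ℝ) ^ γ < 1 := Real.rpow_lt_one (by norm_num) (by norm_num) hγ
    exact Or.inl ⟨c / γ * (1 - (1 / 2) ^ γ), mul_pos (div_pos hc hγ) (sub_pos.2 h2), ρ, hρ,
      mul_rpow_le_of_monotoneOn_sub_rpow hneg hmono⟩

theorem signedPowerBound_of_rpow_le_deriv (hc : 0 < c) (hρ : 0 < ρ)
    (hη : ∀ r ∈ Ioo 0 ρ, HasDerivAt η (η' r) r) (hle : ∀ r ∈ Ioo 0 ρ, c * r ^ (γ - 1) ≤ η' r) :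
    SignedPowerBound η γ := by
  rcases lt_trichotomy γ 0 with hγ | rfl | hγ
  · exact signedPowerBound_iff.2
      (Or.inr (powerLowerBound_neg_of_rpow_le_deriv_of_neg hc hγ hρ hη hle))
  · refine signedPowerBound_iff.2
      (Or.inr (powerLowerBound_neg_of_inv_le_deriv hc hρ hη fun r hr => ?_))
    simpa [Real.rpow_neg_one] using hle r hr
  · exact signedPowerBound_of_rpow_le_deriv_of_pos hc hγ hρ hη hle

end Integration

section RadialLaplacian

variable {n : ℕ} {η : ℝ → ℝ}

theorem lrad_neg : Lrad n (-η) = -Lrad n η := by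
  funext r
  simp only [Lrad, deriv.neg', deriv.fun_neg, Pi.neg_apply]
  ring

theorem ContDiffOn.lrad {N : WithTop ℕ∞} (h : ContDiffOn ℝ (N + 2) η (Ioi 0)) :
    ContDiffOn ℝ N (Lrad n η) (Ioi 0) := by
  have h1 : ContDiffOn ℝ (N + 1) (deriv η) (Ioi 0) :=
    h.deriv_of_isOpen isOpen_Ioi (by rw [add_assoc, one_add_one_eq_two])
  have h2 : ContDiffOn ℝ N (deriv (deriv η)) (Ioi 0) := h1.deriv_of_isOpen isOpen_Ioi le_rfl
  have hcoeff : ContDiffOn ℝ N (fun r : ℝ => (n : ℝ) / r) (Ioi 0) :=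
    contDiffOn_const.div contDiffOn_id fun r hr => hr.ne'
  exact h2.add (hcoeff.mul (h1.of_le le_self_add))

theorem hasDerivAt_rpow_mul_deriv {r : ℝ} (hr : 0 < r) (hη : DifferentiableAt ℝ (deriv η) r) :
    HasDerivAt (fun x => x ^ (n : ℝ) * deriv η x) (r ^ (n : ℝ) * Lrad n η r) r := by
  refine ((Real.hasDerivAt_rpow_const (p := n) (Or.inl hr.ne')).mul hη.hasDerivAt).congr_deriv ?_
  rw [Lrad, Real.rpow_sub hr, Real.rpow_one]
  field_simp
  ring

theorem monotoneOn_rpow_mul_deriv_sub_rpow {α c ρ : ℝ} (hα : n + α + 1 ≠ 0)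
    (hη' : DifferentiableOn ℝ (deriv η) (Ioi 0)) (hL : ∀ r ∈ Ioo 0 ρ, c * r ^ α ≤ Lrad n η r) :
    MonotoneOn (fun r => r ^ (n : ℝ) * deriv η r - c / (n + α + 1) * r ^ (n + α + 1 : ℝ))
      (Ioo 0 ρ) := by
  refine monotoneOn_sub_rpow_of_rpow_le_deriv hα
    (fun r hr => hasDerivAt_rpow_mul_deriv hr.1 (hη'.differentiableAt (Ioi_mem_nhds hr.1)))
    fun r hr => ?_
  calc c * r ^ (n + α + 1 - 1 : ℝ) = r ^ (n : ℝ) * (c * r ^ α) := by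
        rw [add_sub_cancel_right, Real.rpow_add hr.1]; ring
    _ ≤ r ^ (n : ℝ) * Lrad n η r :=
        mul_le_mul_of_nonneg_left (hL r hr) (Real.rpow_nonneg hr.1.le _)

theorem signedPowerBound_of_rpow_le_lrad (hn : 2 ≤ n) {α c ρ : ℝ} (hα : 1 - n ≤ α) (hc : 0 < c)
    (hρ : 0 < ρ) (hη : DifferentiableOn ℝ η (Ioi 0)) (hη' : DifferentiableOn ℝ (deriv η) (Ioi 0))
    (hL : ∀ r ∈ Ioo 0 ρ, c * r ^ α ≤ Lrad n η r) : SignedPowerBound η (α + 2) := by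
  have hn' : (2 : ℝ) ≤ n := by exact_mod_cast hn
  have hβ : (0 : ℝ) < n + α + 1 := by linarith
  have hmono := monotoneOn_rpow_mul_deriv_sub_rpow hβ.ne' hη' hL
  set β : ℝ := n + α + 1 with hβdef
  have hderiv : ∀ r ∈ Ioo 0 ρ, HasDerivAt η (deriv η r) r :=
    fun r hr => (hη.differentiableAt (Ioi_mem_nhds hr.1)).hasDerivAt
  by_cases hneg : ∃ s ∈ Ioo 0 ρ, s ^ (n : ℝ) * deriv η s < 0
  · obtain ⟨s, hs, hws⟩ := hneg
    -- `r ^ n * η' r ≤ s ^ n * η' s < 0` on `(0, s)`, so `-η` has derivative `≳ r ^ (-n)`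
    have hbound : ∀ r ∈ Ioo 0 s,
        -(s ^ (n : ℝ) * deriv η s) * r ^ ((1 - n : ℝ) - 1) ≤ -deriv η r := by
      intro r ⟨hr0, hrs⟩
      have hw := le_of_monotoneOn_sub_rpow (div_pos hc hβ).le hβ.le hmono
        ⟨hr0, hrs.trans hs.2⟩ hs hrs.le
      have hrn : 0 < r ^ (n : ℝ) := Real.rpow_pos_of_pos hr0 _
      rw [show (1 - n : ℝ) - 1 = -n by ring, Real.rpow_neg hr0.le, neg_mul, neg_le_neg_iff,
        ← div_eq_mul_inv, le_div_iff₀ hrn]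
      linarith
    have hlow := powerLowerBound_neg_of_rpow_le_deriv_of_neg (η := -η) (neg_pos.2 hws)
      (by linarith) hs.1 (fun r hr => (hderiv r ⟨hr.1, hr.2.trans hs.2⟩).neg) hbound
    rw [neg_neg] at hlow
    exact Or.inl (hlow.mono (by linarith))
  · simp only [not_exists, not_and, not_lt] at hneg
    have h2 : (1 / 2 : ℝ) ^ β < 1 := Real.rpow_lt_one (by norm_num) (by norm_num) hβ
    refine signedPowerBound_of_rpow_le_deriv (mul_pos (div_pos hc hβ) (sub_pos.2 h2)) hρ hderiv
      fun r hr => ?_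
    have hrn : 0 < r ^ (n : ℝ) := Real.rpow_pos_of_pos hr.1 _
    rw [← mul_le_mul_iff_right₀ hrn]
    calc r ^ (n : ℝ) * (c / β * (1 - (1 / 2) ^ β) * r ^ (α + 2 - 1))
        = c / β * (1 - (1 / 2) ^ β) * r ^ β := by
          rw [mul_left_comm, ← Real.rpow_add hr.1, show n + (α + 2 - 1) = β by rw [hβdef]; ring]
      _ ≤ r ^ (n : ℝ) * deriv η r := mul_rpow_le_of_monotoneOn_sub_rpow hneg hmono r hr

theorem SignedPowerBound.of_lrad (hn : 2 ≤ n) {α : ℝ} (hα : 1 - n ≤ α)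
    (hη : DifferentiableOn ℝ η (Ioi 0)) (hη' : DifferentiableOn ℝ (deriv η) (Ioi 0))
    (hL : SignedPowerBound (Lrad n η) α) : SignedPowerBound η (α + 2) := by
  rcases signedPowerBound_iff.1 hL with ⟨c, hc, ρ, hρ, hle⟩ | ⟨c, hc, ρ, hρ, hle⟩
  · exact signedPowerBound_of_rpow_le_lrad hn hα hc hρ hη hη' hle
  · rw [← signedPowerBound_neg]
    refine signedPowerBound_of_rpow_le_lrad hn hα hc hρ hη.neg ?_ ?_
    · rw [deriv.neg']
      exact hη'.neg
    · rwa [lrad_neg]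

theorem signedPowerBound_of_iterate_lrad (hn : 2 ≤ n) {α : ℝ} (hα : 1 - n ≤ α) :
    ∀ (k : ℕ) {ξ : ℝ → ℝ}, ContDiffOn ℝ (2 * k) ξ (Ioi 0) →
      SignedPowerBound ((Lrad n)^[k] ξ) α → SignedPowerBound ξ (α + 2 * k)
  | 0, ξ, _, h => by simpa using h
  | k + 1, ξ, hξ, h => by
    have hξ' : ContDiffOn ℝ (2 * k + 2) ξ (Ioi 0) := by
      convert hξ using 1; push_cast; ring
    have hLξ := signedPowerBound_of_iterate_lrad hn hα k hξ'.lrad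
      (by rwa [← Function.iterate_succ_apply])
    have h2 : ContDiffOn ℝ 2 ξ (Ioi 0) := hξ'.of_le le_add_self
    have hd' : DifferentiableOn ℝ (deriv ξ) (Ioi 0) :=
      (h2.deriv_of_isOpen isOpen_Ioi (m := 1) (by norm_num)).differentiableOn one_ne_zero
    convert hLξ.of_lrad hn (hα.trans (le_add_of_nonneg_right (by positivity)))
      (h2.differentiableOn two_ne_zero) hd' using 1
    push_cast
    ring

end RadialLaplacian

theorem statement18 (n m : ℕ) (hn : 4 ≤ n) (hm : 1 ≤ m)
    (ξ : ℝ → ℝ) (hreg : ContDiffOn ℝ (2*m) ξ (Set.Ioi (0:ℝ)))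
    (hyp :
      (∃ c₁ : ℝ, 0 < c₁ ∧ ∃ r₁ : ℝ, 0 < r₁ ∧ ∀ r ∈ Set.Ioo (0:ℝ) r₁,
        c₁ * r ^ ((1:ℝ) - n) ≤ (Lrad n)^[m-1] ξ r) ∨
      (∃ c₁ : ℝ, 0 < c₁ ∧ ∃ r₁ : ℝ, 0 < r₁ ∧ ∀ r ∈ Set.Ioo (0:ℝ) r₁,
        (Lrad n)^[m-1] ξ r ≤ -(c₁ * r ^ ((1:ℝ) - n)))) :
    (∃ c : ℝ, 0 < c ∧ ∃ rm : ℝ, 0 < rm ∧ ∀ r ∈ Set.Ioo (0:ℝ) rm,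
      c * r ^ (2*(m:ℝ) - 1 - n) ≤ ξ r) ∨
    (∃ c : ℝ, 0 < c ∧ ∃ rm : ℝ, 0 < rm ∧ ∀ r ∈ Set.Ioo (0:ℝ) rm,
      ξ r ≤ -(c * r ^ (2*(m:ℝ) - 1 - n))) := by
  have hreg' : ContDiffOn ℝ (2 * (m - 1 : ℕ)) ξ (Ioi 0) :=
    hreg.of_le (by exact_mod_cast (by omega : 2 * (m - 1) ≤ 2 * m))
  have h := signedPowerBound_of_iterate_lrad (by omega) le_rfl (m - 1) hreg' hyp
  have hexp : (1 - n : ℝ) + 2 * (m - 1 : ℕ) = 2 * m - 1 - n := by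
    rw [Nat.cast_sub hm]; push_cast; ring
  rw [hexp] at h
  exact h
end
end
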